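/- For any constant δ > 0 and any ε := ε_1 p_0 ∈ (0,1], (μ,λ)-selection with λ/μ ≥ (1+δ)/ε satisfies: setting γ_0 := μ/λ, for every population P of size λ and every γ ∈ (0, γ_0], the probability β(γ,P) of selecting an individual at least as fit as the individual of rank ⌈γλ⌉ satisfies β(γ,P) ≥ λγ/μ ≥ γ √((1+δ)/(ε γ_0)); in particular condition (C4) holds with this γ_0. -/

import Mathlib

/-!
Since `γ ≤ μ/λ`, the rank `r := ⌈γλ⌉` is at most `μ`, so the `r` fittest individuals, all at
least as fit as the one of rank `r`, are among the `μ` from which `(μ,λ)`-selection samples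
uniformly. Hence `β(γ,P) ≥ r/μ ≥ λγ/μ`. The second inequality is arithmetic:
`(1+δ)/(ε γ₀) = ((1+δ)/ε) (λ/μ) ≤ (λ/μ)²`.
-/

open scoped ENNReal

/-- The `r`-th largest value (rank `r`, `1`-indexed) of the multiset of values
`g 0, …, g (lam-1)`. -/
noncomputable def rankVal {lam : ℕ} (g : Fin lam → ℝ) (r : ℕ) : ℝ :=
  ((List.ofFn g).insertionSort (· ≥ ·)).getD (r - 1) 0

/-- The indices of the population `P` sorted by descending fitness. -/
noncomputable def sortedIdx {X : Type*} {lam : ℕ} (f : X → ℝ) (P : Fin lam → X) :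
    List (Fin lam) :=
  letI : DecidableRel (fun i j : Fin lam => f (P j) ≤ f (P i)) :=
    fun _ _ => Real.decidableLE _ _
  (List.finRange lam).insertionSort fun i j => f (P j) ≤ f (P i)

/-- `(μ,λ)`-selection: a parent is sampled uniformly at random among the `μ`
fittest individuals of the population `P` of size `λ`. -/
noncomputable def commaSel {X : Type*} {lam : ℕ} [NeZero lam] (mu : ℕ) [NeZero mu]
    (f : X → ℝ) (P : Fin lam → X) : PMF (Fin lam) :=
  (PMF.uniformOfFintype (Fin mu)).map fun t => (sortedIdx f P).getD (t : ℕ) default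

/-- Selective pressure `β(γ, P)` of a selection mechanism: the probability of
selecting an individual at least as fit as the individual of rank `⌈γλ⌉`. -/
noncomputable def selPressure {X : Type*} {lam : ℕ} (f : X → ℝ)
    (psel : (Fin lam → X) → PMF (Fin lam)) (P : Fin lam → X) (γ : ℝ) : ℝ≥0∞ :=
  (psel P).toOuterMeasure {i | rankVal (fun i => f (P i)) ⌈γ * lam⌉₊ ≤ f (P i)}

section SortedIdx

variable {X : Type*} {lam : ℕ} (f : X → ℝ) (P : Fin lam → X)

theorem length_sortedIdx : (sortedIdx f P).length = lam := by
  rw [sortedIdx, List.length_insertionSort, List.length_finRange]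

theorem map_sortedIdx :
    (sortedIdx f P).map (fun i => f (P i)) =
      (List.ofFn fun i => f (P i)).insertionSort (· ≥ ·) := by
  have : Std.Total fun i j : Fin lam => f (P j) ≤ f (P i) := ⟨fun _ _ => le_total _ _⟩
  have : IsTrans (Fin lam) fun i j => f (P j) ≤ f (P i) := ⟨fun _ _ _ h₁ h₂ => h₂.trans h₁⟩
  refine List.Perm.eq_of_pairwise' (r := (· ≥ ·)) ?_ (List.pairwise_insertionSort _ _) ?_
  · exact List.pairwise_map.mpr (List.pairwise_insertionSort _ _)
  · rw [List.ofFn_eq_map]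
    exact ((List.perm_insertionSort _ _).map _).trans (List.perm_insertionSort _ _).symm

theorem rankVal_le_of_lt [NeZero lam] {r t : ℕ} (ht : t < r) (hr : r ≤ lam) :
    rankVal (fun i => f (P i)) r ≤ f (P ((sortedIdx f P).getD t default)) := by
  have hsorted := List.pairwise_insertionSort (· ≥ ·) (List.ofFn fun i => f (P i))
  rw [← map_sortedIdx] at hsorted
  have hlen := length_sortedIdx f P
  have hr' : r - 1 < ((sortedIdx f P).map fun i => f (P i)).length := by
    rw [List.length_map]; omega
  have ht' : t < (sortedIdx f P).length := by omega
  rw [rankVal, ← map_sortedIdx, List.getD_eq_getElem _ _ hr', List.getD_eq_getElem _ _ ht']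
  exact (hsorted.rel_get_of_le (a := ⟨t, by rwa [List.length_map]⟩) (b := ⟨r - 1, hr'⟩)
    (Fin.mk_le_mk.mpr (by omega))).trans_eq (List.getElem_map _)

end SortedIdx

section CommaSelection

variable {X : Type*} {lam : ℕ} [NeZero lam] (mu : ℕ) [NeZero mu] (f : X → ℝ) (P : Fin lam → X)

theorem toOuterMeasure_commaSel (s : Set (Fin lam)) :
    (commaSel mu f P).toOuterMeasure s = (PMF.uniformOfFintype (Fin mu)).toOuterMeasure
      ((fun t : Fin mu => (sortedIdx f P).getD t default) ⁻¹' s) := by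
  rw [commaSel, PMF.toOuterMeasure_map_apply]
  -- `commaSel` first coerces the uniform law to `PMF ℕ` (a monadic lift along `Fin.val`).
  exact PMF.toOuterMeasure_map_apply Fin.val _ _

theorem ceil_div_le_selPressure_commaSel {γ : ℝ} (hmu : mu ≤ lam) (hγ : ⌈γ * lam⌉₊ ≤ mu) :
    (⌈γ * lam⌉₊ : ℝ≥0∞) / mu ≤ selPressure f (commaSel mu f) P γ := by
  calc (⌈γ * lam⌉₊ : ℝ≥0∞) / mu
      = (PMF.uniformOfFintype (Fin mu)).toOuterMeasure {t | (t : ℕ) < ⌈γ * lam⌉₊} := by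
        rw [PMF.toOuterMeasure_uniformOfFintype_apply, Fintype.card_fin]
        congr
        exact_mod_cast (Fintype.card_fin_lt_of_le hγ).symm
    _ ≤ selPressure f (commaSel mu f) P γ := by
        rw [selPressure, toOuterMeasure_commaSel]
        exact MeasureTheory.measure_mono fun t ht => rankVal_le_of_lt f P ht (hγ.trans hmu)

end CommaSelection

theorem comma_selection_satisfies_C4_general
    {X : Type*} {lam : ℕ} [NeZero lam] (mu : ℕ) [NeZero mu]
    (f : X → ℝ) (δ ε γ0 : ℝ)
    (hδ : 0 < δ) (hε0 : 0 < ε) (hεle : ε ≤ 1)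
    (hγ0 : γ0 = (mu : ℝ) / lam)
    (hratio : (1 + δ) / ε ≤ (lam : ℝ) / mu) :
    ∀ (P : Fin lam → X) (γ : ℝ), 0 < γ → γ ≤ γ0 →
      ENNReal.ofReal (lam * γ / mu) ≤ selPressure f (commaSel mu f) P γ ∧
      γ * Real.sqrt ((1 + δ) / (ε * γ0)) ≤ lam * γ / mu := by
  intro P γ hγ hγle
  have hmu : (0 : ℝ) < mu := Nat.cast_pos.mpr (NeZero.pos mu)
  have hlam : (0 : ℝ) < lam := Nat.cast_pos.mpr (NeZero.pos lam)
  have hmu_lt_lam : (mu : ℝ) < lam :=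
    (one_lt_div hmu).mp (((one_lt_div hε0).mpr (by linarith)).trans_le hratio)
  have hceil : ⌈γ * lam⌉₊ ≤ mu := Nat.ceil_le.mpr (by rwa [hγ0, le_div_iff₀ hlam] at hγle)
  refine ⟨?_, ?_⟩
  · refine le_trans ?_ (ceil_div_le_selPressure_commaSel mu f P
      (by exact_mod_cast hmu_lt_lam.le) hceil)
    rw [ENNReal.ofReal_div_of_pos hmu, ENNReal.ofReal_natCast mu,
      ← ENNReal.ofReal_natCast ⌈γ * lam⌉₊]
    gcongr
    linarith [Nat.le_ceil (γ * lam)]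
  · have hsplit : (1 + δ) / (ε * γ0) = (1 + δ) / ε * (lam / mu) := by
      rw [hγ0]
      field_simp
    have hsqrt : Real.sqrt ((1 + δ) / (ε * γ0)) ≤ lam / mu := by
      rw [hsplit, Real.sqrt_le_iff, sq]
      exact ⟨by positivity, mul_le_mul_of_nonneg_right hratio (by positivity)⟩
    calc γ * Real.sqrt ((1 + δ) / (ε * γ0)) ≤ γ * (lam / mu) := by gcongr
      _ = lam * γ / mu := by ring

/-- **Lemma 1(2)**: for any constant `δ > 0` and `ε := ε₁p₀ ∈ (0,1]`,
`(μ,λ)`-selection with `λ/μ ≥ (1+δ)/ε` satisfies, with `γ₀ := μ/λ`, for every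
population `P` of size `λ` and every `γ ∈ (0, γ₀]`,
`β(γ,P) ≥ λγ/μ ≥ γ √((1+δ)/(ε γ₀))`; in particular condition (C4) holds with
this `γ₀`. -/
theorem comma_selection_satisfies_C4
    {X : Type*} {lam : ℕ} [NeZero lam] (mu : ℕ) [NeZero mu]
    (f : X → ℝ) (δ ε1 p0 ε γ0 : ℝ)
    (hδ : 0 < δ) (hε : ε = ε1 * p0) (hε0 : 0 < ε) (hεle : ε ≤ 1)
    (hγ0 : γ0 = (mu : ℝ) / lam)
    (hratio : (1 + δ) / ε ≤ (lam : ℝ) / mu) :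
    ∀ (P : Fin lam → X) (γ : ℝ), 0 < γ → γ ≤ γ0 →
      ENNReal.ofReal (lam * γ / mu) ≤ selPressure f (commaSel mu f) P γ ∧
      γ * Real.sqrt ((1 + δ) / (ε * γ0)) ≤ lam * γ / mu :=
  comma_selection_satisfies_C4_general mu f δ ε γ0 hδ hε0 hεle hγ0 hratio
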